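/- arXiv:math/0607494 — 3 statements merged into one kernel-verified Lean document; each statement's English description precedes it below -/
import Mathlib

section
/- Let d₁,…,d_g be positive integers and let b be a positive divisor of ψ(d₁,…,d_g). Setting c_i := d_i / gcd(d_i, b²) for i = 1,…,g, one has ψ(d₁,…,d_g) = b · ψ(c₁,…,c_g). -/
open Finset

def psi (g : ℕ) (d : Fin g → ℕ) : ℕ :=
  ∏ p ∈ (∏ i, d i).primeFactors,
    p ^ (((Finset.univ.sup fun i => (d i).factorization p) + 1) / 2)

/-! Everything is read off one prime `p` at a time. With `M = maxᵢ v_p(dᵢ)` and `e = v_p(b)`,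
`v_p(ψ(d)) = ⌈M/2⌉`; dividing `dᵢ` by `gcd(dᵢ, b²)` lowers `v_p(dᵢ)` by `2e` (truncated at `0`),
so it lowers `M` by `2e`. Since `e ≤ ⌈M/2⌉`, i.e. `M ≥ 2e - 1`, the truncation is harmless and
`⌈M/2⌉ = e + ⌈(M - 2e)/2⌉`. -/

theorem psi_ne_zero (g : ℕ) (d : Fin g → ℕ) : psi g d ≠ 0 :=
  Finset.prod_ne_zero_iff.2 fun _ hp => pow_ne_zero _ (Nat.pos_of_mem_primeFactors hp).ne'

theorem factorization_psi {g : ℕ} {d : Fin g → ℕ} (hd : ∀ i, d i ≠ 0) (q : ℕ) :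
    (psi g d).factorization q = ((univ.sup fun i => (d i).factorization q) + 1) / 2 := by
  unfold psi
  rw [Nat.factorization_prod fun p hp => pow_ne_zero _ (Nat.pos_of_mem_primeFactors hp).ne',
    Finsupp.finsetSum_apply, Finset.sum_congr rfl fun p hp => by
      rw [Nat.factorization_pow, (Nat.prime_of_mem_primeFactors hp).factorization,
        Finsupp.smul_apply, Finsupp.single_apply, smul_eq_mul, mul_ite, mul_one, mul_zero],
    Finset.sum_ite_eq']
  split_ifs with hq
  · rfl
  · have hq0 : (∏ i, d i).factorization q = 0 := by
      rwa [← Finsupp.notMem_support_iff, Nat.support_factorization]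
    rw [Nat.factorization_prod fun i _ => hd i, Finsupp.finsetSum_apply,
      Finset.sum_eq_zero_iff] at hq0
    rw [(Finset.sup_eq_bot_iff _ _).2 hq0]; rfl

theorem Nat.factorization_div_gcd {n m : ℕ} (hn : n ≠ 0) (hm : m ≠ 0) :
    (n / n.gcd m).factorization = n.factorization - m.factorization := by
  ext p
  simp only [Nat.factorization_div (Nat.gcd_dvd_left n m), Nat.factorization_gcd hn hm,
    Finsupp.tsub_apply, Finsupp.inf_apply]
  omega

theorem Finset.sup_tsub_const {ι : Type*} (s : Finset ι) (f : ι → ℕ) (k : ℕ) :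
    (s.sup fun i => f i - k) = s.sup f - k :=
  (Finset.apply_sup_eq_sup_comp (· - k) (fun a b => (Nat.sub_max_sub_right a b k).symm)
    (Nat.zero_sub k)).symm

theorem stmt2_general (g : ℕ) (d : Fin g → ℕ) (hd : ∀ i, 0 < d i)
    (b : ℕ) (hdvd : b ∣ psi g d) :
    psi g d = b * psi g (fun i => d i / Nat.gcd (d i) (b ^ 2)) := by
  have hb : b ≠ 0 := ne_zero_of_dvd_ne_zero (psi_ne_zero g d) hdvd
  have hb2 : b ^ 2 ≠ 0 := pow_ne_zero 2 hb
  have hc : ∀ i, d i / (d i).gcd (b ^ 2) ≠ 0 := fun i =>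
    (Nat.div_pos (Nat.gcd_le_left _ (hd i)) (Nat.gcd_pos_of_pos_left _ (hd i))).ne'
  refine Nat.eq_of_factorization_eq (psi_ne_zero g d) (mul_ne_zero hb (psi_ne_zero g _))
    fun q => ?_
  have hbq := (Nat.factorization_le_iff_dvd hb (psi_ne_zero g d)).2 hdvd q
  rw [factorization_psi (fun i => (hd i).ne')] at hbq ⊢
  simp only [Nat.factorization_mul hb (psi_ne_zero g _), Finsupp.add_apply, factorization_psi hc,
    Nat.factorization_div_gcd (hd _).ne' hb2, Finsupp.tsub_apply, Nat.factorization_pow,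
    Finsupp.smul_apply, smul_eq_mul, Finset.sup_tsub_const]
  omega

/-- if `b ∣ ψ(d)` then `ψ(d) = b · ψ(c)` where `cᵢ = dᵢ/gcd(dᵢ,b²)`. -/
theorem stmt2 (g : ℕ) (hg : 1 ≤ g) (d : Fin g → ℕ) (hd : ∀ i, 0 < d i)
    (b : ℕ) (hb : 0 < b) (hdvd : b ∣ psi g d) :
    psi g d = b * psi g (fun i => d i / Nat.gcd (d i) (b ^ 2)) :=
  stmt2_general g d hd b hdvd
end

section
/- Assume D ≠ 0. There exists a constant C > 0, depending only on the forms q₁,…,q_g, with the following property: for every prime p, all integers e₁,…,e_g ≥ 0, and every permutation σ of {1,…,g} such that e_{σ(1)} ≤ e_{σ(2)} ≤ … ≤ e_{σ(g)}, one has ρ(p^{e₁},…,p^{e_g}) ≤ C · (e_{σ(g)} − e_{σ(g−1)} + 1) · p^{2·e_{σ(1)} + … + 2·e_{σ(g−1)} + e_{σ(g)}}. -/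
open Finset

/-- The binary quadratic form `q_i(x,y) = a_i x^2 + 2 b_i x y + c_i y^2`. -/
def qf {g : ℕ} (a b c : Fin g → ℤ) (i : Fin g) (x : ℤ × ℤ) : ℤ :=
  a i * x.1 ^ 2 + 2 * b i * x.1 * x.2 + c i * x.2 ^ 2

/-- The resolvent of two binary quadratic forms. -/
def res₂ (a₁ b₁ c₁ a₂ b₂ c₂ : ℤ) : ℤ :=
  (a₁ * c₂ - a₂ * c₁) ^ 2 - 4 * (b₁ * c₂ - b₂ * c₁) * (a₁ * b₂ - a₂ * b₁)

/-- The quantity `D`. -/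
def Dconst (g : ℕ) (a b c : Fin g → ℤ) : ℤ :=
  (∏ p ∈ (Finset.range (2 * g + 1)).filter Nat.Prime, (p : ℤ)) *
    (∏ k, a k * c k * (b k ^ 2 - a k * c k)) *
    ∏ i, ∏ j ∈ Finset.Ioi i, res₂ (a i) (b i) (c i) (a j) (b j) (c j)

/-- `ρ(d₁,…,d_g)`. -/
def rho (g : ℕ) (a b c : Fin g → ℤ) (d : Fin g → ℕ) : ℕ :=
  (((Finset.range (∏ i, d i)) ×ˢ (Finset.range (∏ i, d i))).filter
    (fun x => ∀ i, (d i : ℤ) ∣ qf a b c i ((x.1 : ℤ), (x.2 : ℤ)))).card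

/-- `ρ*(d₁,…,d_g)`. -/
def rhostar (g : ℕ) (a b c : Fin g → ℤ) (d : Fin g → ℕ) : ℕ :=
  (((Finset.range (∏ i, d i)) ×ˢ (Finset.range (∏ i, d i))).filter
    (fun x => (∀ i, (d i : ℤ) ∣ qf a b c i ((x.1 : ℤ), (x.2 : ℤ))) ∧
      Nat.gcd (Nat.gcd x.1 x.2) (∏ i, d i) = 1)).card

/-!
The conditions are periodic modulo `p ^ E`, `E = max eᵢ`, which accounts for the factor
`p ^ (2 (∑ eᵢ - E))`, and it suffices to keep the conditions for the two largest exponents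
`n₁ ≤ n₂ = E`. Sort the points `(x, y)` modulo `p ^ n₂` by the level
`k = v_p(gcd(x, y))`. The points with `2k ≥ n₂` number at most `p ^ n₂`. At a level `k < n₂ / 2`,
`(x, y) = p ^ k (X, Y)` with `(X, Y)` primitive, so `X / Y` or `Y / X` is a root of a quadratic
modulo `p ^ (n₂ - 2k)`; completing the square bounds the number of such roots independently of
`p` and of the exponent, and the level contributes `O(p ^ n₂)` points. Finally `Res(q₁, q₂) X³` and
`Res(q₁, q₂) Y³` lie in the ideal `(q₁, q₂)`, so `p ^ (n₁ - 2k)` divides `Res(q₁, q₂) ≠ 0`: only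
`n₂ - n₁ + O(1)` levels are occupied.
-/

lemma pow_le_natAbs_of_dvd {p k : ℕ} {z : ℤ} (h : (p : ℤ) ^ k ∣ z) (hz : z ≠ 0) :
    p ^ k ≤ z.natAbs := by
  simpa using Int.natAbs_le_of_dvd_ne_zero h hz

lemma pow_padicValInt_le_natAbs {p : ℕ} {z : ℤ} (hz : z ≠ 0) : p ^ padicValInt p z ≤ z.natAbs :=
  pow_le_natAbs_of_dvd (padicValInt_dvd z) hz

section Valuation

variable {p : ℕ} [hp : Fact p.Prime]

lemma pow_sub_dvd_of_pow_dvd_mul {A B : ℤ} {n j : ℕ} (h : (p : ℤ) ^ n ∣ A * B)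
    (hA : ¬ (p : ℤ) ^ (j + 1) ∣ A) : (p : ℤ) ^ (n - j) ∣ B := by
  have hA0 : A ≠ 0 := by rintro rfl; exact hA (dvd_zero _)
  rcases eq_or_ne B 0 with rfl | hB0
  · exact dvd_zero _
  rw [padicValInt_dvd_iff] at h hA ⊢
  simp only [mul_eq_zero, hA0, hB0, or_self, false_or, padicValInt.mul hA0 hB0] at h hA ⊢
  omega

lemma pow_sub_dvd_of_pow_dvd_pow_mul {A : ℤ} {n m : ℕ} (h : (p : ℤ) ^ n ∣ (p : ℤ) ^ m * A) :
    (p : ℤ) ^ (n - m) ∣ A := by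
  refine pow_sub_dvd_of_pow_dvd_mul h ?_
  rw [pow_dvd_pow_iff (by exact_mod_cast hp.out.ne_zero)
    (Nat.prime_iff_prime_int.mp hp.out).not_isUnit]
  omega

lemma not_pow_padicValInt_succ_dvd {z : ℤ} (hz : z ≠ 0) :
    ¬ (p : ℤ) ^ (padicValInt p z + 1) ∣ z := by
  simp [padicValInt_dvd_iff, hz]

lemma pow_sub_dvd_sub_or_add_of_pow_dvd_sq_sub_sq {u v : ℤ} {n j : ℕ}
    (h : (p : ℤ) ^ n ∣ u ^ 2 - v ^ 2) (hu : ¬ (p : ℤ) ^ (j + 1) ∣ 2 * u) :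
    (p : ℤ) ^ (n - j) ∣ u - v ∨ (p : ℤ) ^ (n - j) ∣ u + v := by
  rw [show u ^ 2 - v ^ 2 = (u - v) * (u + v) by ring] at h
  by_cases hsub : (p : ℤ) ^ (j + 1) ∣ u - v
  · have hadd : ¬ (p : ℤ) ^ (j + 1) ∣ u + v := fun hadd =>
      hu (by simpa [two_mul, add_add_sub_cancel] using dvd_add hsub hadd)
    exact .inl (pow_sub_dvd_of_pow_dvd_mul (mul_comm (u - v) _ ▸ h) hadd)
  · exact .inr (pow_sub_dvd_of_pow_dvd_mul h hsub)

end Valuation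

def grid (N : ℕ) : Finset (ℕ × ℕ) := range N ×ˢ range N

lemma mem_grid {N : ℕ} {z : ℕ × ℕ} : z ∈ grid N ↔ z.1 < N ∧ z.2 < N := by
  simp [grid]

lemma card_grid (N : ℕ) : (grid N).card = N ^ 2 := by
  simp [grid, sq]

lemma card_le_of_forall_modEq {s : Finset ℕ} {M N K : ℕ} (hs : s ⊆ range M) (hM : M ≤ N * K)
    (h : ∀ t ∈ s, ∀ t' ∈ s, t ≡ t' [MOD N]) : s.card ≤ K := by
  refine (card_le_card_of_injOn (· / N) (fun t ht => ?_) fun t ht t' ht' he => ?_).trans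
    (card_range K).le
  · exact mem_coe.mpr (mem_range.mpr
      (Nat.div_lt_of_lt_mul ((mem_range.mp (hs ht)).trans_le hM)))
  · exact Nat.ext_div_mod he (h t ht t' ht')

lemma card_filter_grid_mul_le {K N : ℕ} (hN : 0 < N) (P : ℕ × ℕ → Prop) [DecidablePred P]
    (hP : ∀ x y, P (x, y) ↔ P (x % N, y % N)) :
    ((grid (K * N)).filter P).card ≤ K ^ 2 * ((grid N).filter P).card := by
  rw [← card_grid, ← card_product]
  refine card_le_card_of_injOn (fun z => ((z.1 / N, z.2 / N), (z.1 % N, z.2 % N)))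
    (fun z hz => ?_) fun z _ z' _ he => ?_
  · obtain ⟨hz, hPz⟩ := mem_filter.mp hz
    rw [mem_grid] at hz
    simp only [coe_product, coe_filter, Set.mem_prod, mem_coe, mem_grid, Set.mem_ofPred_eq]
    exact ⟨⟨Nat.div_lt_of_lt_mul (mul_comm K N ▸ hz.1), Nat.div_lt_of_lt_mul (mul_comm K N ▸ hz.2)⟩,
      ⟨Nat.mod_lt _ hN, Nat.mod_lt _ hN⟩, (hP z.1 z.2).mp hPz⟩
  · simp only [Prod.mk.injEq] at he
    exact Prod.ext (Nat.ext_div_mod he.1.1 he.2.1) (Nat.ext_div_mod he.1.2 he.2.2)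

lemma card_le_card_filter_grid_of_dvd {S : Finset (ℕ × ℕ)} {d M : ℕ} (P : ℕ × ℕ → Prop)
    [DecidablePred P] (hS : S ⊆ grid (d * M))
    (h : ∀ z ∈ S, d ∣ z.1 ∧ d ∣ z.2 ∧ P (z.1 / d, z.2 / d)) :
    S.card ≤ ((grid M).filter P).card := by
  refine card_le_card_of_injOn (fun z => (z.1 / d, z.2 / d)) (fun z hz => ?_)
    fun z hz z' hz' he => ?_
  · have hzb := mem_grid.mp (hS hz)
    simp only [coe_filter, mem_grid, Set.mem_ofPred_eq]
    exact ⟨⟨Nat.div_lt_of_lt_mul hzb.1, Nat.div_lt_of_lt_mul hzb.2⟩, (h z hz).2.2⟩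
  · simp only [Prod.mk.injEq] at he
    obtain ⟨h1, h2, -⟩ := h z hz
    obtain ⟨h1', h2', -⟩ := h z' hz'
    exact Prod.ext (by rw [← Nat.div_mul_cancel h1, he.1, Nat.div_mul_cancel h1'])
      (by rw [← Nat.div_mul_cancel h2, he.2, Nat.div_mul_cancel h2'])

lemma card_le_two_mul_of_forall_dvd_sub_or_add {s : Finset ℕ} {M N K : ℕ} {m : ℤ} (u : ℕ → ℤ)
    (hs : s ⊆ range M) (hM : M ≤ N * K)
    (hclass : ∀ t ∈ s, ∀ t' ∈ s, m ∣ u t - u t' → t ≡ t' [MOD N])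
    (hsign : ∀ t ∈ s, ∀ t' ∈ s, m ∣ u t - u t' ∨ m ∣ u t + u t') : s.card ≤ 2 * K := by
  obtain rfl | ⟨t₁, ht₁⟩ := s.eq_empty_or_nonempty
  · simp
  have hcard : ∀ s' ⊆ s, (∀ t ∈ s', ∀ t' ∈ s', m ∣ u t - u t') → s'.card ≤ K :=
    fun s' hs' h => card_le_of_forall_modEq (hs'.trans hs) hM
      fun t ht t' ht' => hclass t (hs' ht) t' (hs' ht') (h t ht t' ht')
  have h₁ := hcard (s.filter fun t => m ∣ u t - u t₁) (filter_subset _ _)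
    fun t ht t' ht' => by simpa using dvd_sub (mem_filter.mp ht).2 (mem_filter.mp ht').2
  have h₂ := hcard (s.filter fun t => ¬ m ∣ u t - u t₁) (filter_subset _ _)
    fun t ht t' ht' => by
      obtain ⟨ht, hnt⟩ := mem_filter.mp ht
      obtain ⟨ht', hnt'⟩ := mem_filter.mp ht'
      simpa using dvd_sub ((hsign t ht t₁ ht₁).resolve_left hnt)
        ((hsign t' ht' t₁ ht₁).resolve_left hnt')
  rw [← card_filter_add_card_filter_not (fun t => m ∣ u t - u t₁)]
  omega

def bqf (a b c x y : ℤ) : ℤ :=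
  a * x ^ 2 + 2 * b * x * y + c * y ^ 2

section BinaryForm

variable {a b c : ℤ}

lemma bqf_swap (x y : ℤ) : bqf a b c x y = bqf c b a y x := by
  unfold bqf; ring

lemma bqf_mul_mul (d x y : ℤ) : bqf a b c (d * x) (d * y) = d ^ 2 * bqf a b c x y := by
  unfold bqf; ring

lemma sq_sub_four_mul_eq_mul_bqf (t : ℤ) :
    (2 * (a * t + b)) ^ 2 - 4 * (b ^ 2 - a * c) = 4 * a * bqf a b c t 1 := by
  unfold bqf; ring

lemma Int.ModEq.bqf {n x x' y y' : ℤ} (hx : x ≡ x' [ZMOD n]) (hy : y ≡ y' [ZMOD n]) :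
    _root_.bqf a b c x y ≡ _root_.bqf a b c x' y' [ZMOD n] := by
  unfold _root_.bqf; gcongr

lemma dvd_bqf_mod_iff {a b c : ℤ} {d N : ℕ} (hd : d ∣ N) (x y : ℕ) :
    (d : ℤ) ∣ bqf a b c ↑(x % N) ↑(y % N) ↔ (d : ℤ) ∣ bqf a b c x y :=
  have hmod (z : ℕ) : ((z % N : ℕ) : ℤ) ≡ z [ZMOD d] :=
    (Int.natCast_modEq_iff.mpr (Nat.mod_modEq z N)).of_dvd (Int.natCast_dvd_natCast.mpr hd)
  ((hmod x).bqf (hmod y)).dvd_iff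

lemma dvd_bqf_one_of_dvd_bqf {n x y w : ℤ} (hw : x ≡ w * y [ZMOD n]) (hy : IsCoprime n y)
    (h : n ∣ bqf a b c x y) : n ∣ bqf a b c w 1 := by
  have hwy : n ∣ y ^ 2 * bqf a b c w 1 := by
    rw [← bqf_mul_mul, mul_comm y w, mul_one]
    exact (Int.ModEq.dvd_iff (hw.bqf (Int.ModEq.refl y))).mp h
  exact hy.pow_right.dvd_of_dvd_mul_left hwy

lemma res₂_comm (a₁ b₁ c₁ a₂ b₂ c₂ : ℤ) : res₂ a₁ b₁ c₁ a₂ b₂ c₂ = res₂ a₂ b₂ c₂ a₁ b₁ c₁ := by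
  unfold res₂; ring

lemma dvd_res₂_of_dvd_bqf {a₁ b₁ c₁ a₂ b₂ c₂ n x y : ℤ} (hxy : IsCoprime n x ∨ IsCoprime n y)
    (h₁ : n ∣ bqf a₁ b₁ c₁ x y) (h₂ : n ∣ bqf a₂ b₂ c₂ x y) : n ∣ res₂ a₁ b₁ c₁ a₂ b₂ c₂ := by
  set A := a₁ * c₂ - a₂ * c₁
  set B := a₁ * b₂ - a₂ * b₁
  set C := b₁ * c₂ - b₂ * c₁
  have hx : n ∣ res₂ a₁ b₁ c₁ a₂ b₂ c₂ * x ^ 3 := by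
    rw [show res₂ a₁ b₁ c₁ a₂ b₂ c₂ * x ^ 3 =
      (c₂ * (A * x - 2 * C * y) - 4 * C * b₂ * x) * bqf a₁ b₁ c₁ x y +
        (4 * C * b₁ * x - c₁ * (A * x - 2 * C * y)) * bqf a₂ b₂ c₂ x y by unfold res₂ bqf; ring]
    exact dvd_add (h₁.mul_left _) (h₂.mul_left _)
  have hy : n ∣ res₂ a₁ b₁ c₁ a₂ b₂ c₂ * y ^ 3 := by
    rw [show res₂ a₁ b₁ c₁ a₂ b₂ c₂ * y ^ 3 =
      (a₂ * (2 * B * x - A * y) + 4 * B * b₂ * y) * bqf a₁ b₁ c₁ x y -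
        (a₁ * (2 * B * x - A * y) + 4 * B * b₁ * y) * bqf a₂ b₂ c₂ x y by unfold res₂ bqf; ring]
    exact dvd_sub (h₁.mul_left _) (h₂.mul_left _)
  rcases hxy with hxy | hxy
  · exact hxy.pow_right.dvd_of_dvd_mul_right hx
  · exact hxy.pow_right.dvd_of_dvd_mul_right hy

end BinaryForm

-- `2 · (2 · 4|δ|) · 2|a|`: two classes of roots modulo `p ^ n`, each of size at most
-- `p ^ (v_p 2 + v_p (4δ) + v_p (2a))`
def rootBound (a b c : ℤ) : ℕ :=
  32 * a.natAbs * (b ^ 2 - a * c).natAbs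

section Counting

variable {p : ℕ} [hp : Fact p.Prime]

lemma not_pow_dvd_two_mul_of_pow_dvd_sq_sub {u D : ℤ} {n : ℕ} (hD : D ≠ 0)
    (hn : padicValInt p D < n) (h : (p : ℤ) ^ n ∣ u ^ 2 - D) :
    ¬ (p : ℤ) ^ (padicValInt p 2 + padicValInt p D + 1) ∣ 2 * u := by
  intro h2u
  have hu : (p : ℤ) ^ (padicValInt p D + 1) ∣ u := by
    have := pow_sub_dvd_of_pow_dvd_mul h2u (not_pow_padicValInt_succ_dvd two_ne_zero)
    rwa [show padicValInt p 2 + padicValInt p D + 1 - padicValInt p 2 = padicValInt p D + 1 by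
      omega] at this
  have hD' : (p : ℤ) ^ (padicValInt p D + 1) ∣ u ^ 2 - (u ^ 2 - D) :=
    dvd_sub (hu.trans (dvd_pow_self u two_ne_zero)) ((pow_dvd_pow _ hn).trans h)
  exact not_pow_padicValInt_succ_dvd hD (by simpa using hD')

theorem card_roots_le_two_mul_pow {a b c : ℤ} (ha : a ≠ 0) (hδ : b ^ 2 - a * c ≠ 0) {n : ℕ}
    (hn : padicValInt p (4 * (b ^ 2 - a * c)) < n) :
    ((range (p ^ n)).filter fun t : ℕ => (p : ℤ) ^ n ∣ bqf a b c t 1).card ≤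
      2 * p ^ (padicValInt p 2 + padicValInt p (4 * (b ^ 2 - a * c)) + padicValInt p (2 * a)) := by
  set T := (range (p ^ n)).filter fun t : ℕ => (p : ℤ) ^ n ∣ bqf a b c t 1
  -- `v_p(2u) ≤ J` at every root, so `u² ≡ u'²` forces `u ≡ ±u'` modulo `p ^ (n - J)`
  set J := padicValInt p 2 + padicValInt p (4 * (b ^ 2 - a * c))
  set V := padicValInt p (2 * a)
  set u : ℕ → ℤ := fun t => 2 * (a * t + b)
  have hsq : ∀ t ∈ T, (p : ℤ) ^ n ∣ u t ^ 2 - 4 * (b ^ 2 - a * c) := fun t ht => by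
    rw [sq_sub_four_mul_eq_mul_bqf]; exact (mem_filter.mp ht).2.mul_left _
  have hclass (t t' : ℕ) (h : (p : ℤ) ^ (n - J) ∣ u t - u t') : t ≡ t' [MOD p ^ (n - J - V)] := by
    rw [show u t - u t' = 2 * a * (t - t') by ring] at h
    have := pow_sub_dvd_of_pow_dvd_mul h (not_pow_padicValInt_succ_dvd (mul_ne_zero two_ne_zero ha))
    exact (Nat.modEq_iff_dvd.mpr (by push_cast; exact this)).symm
  have hsign : ∀ t ∈ T, ∀ t' ∈ T,
      (p : ℤ) ^ (n - J) ∣ u t - u t' ∨ (p : ℤ) ^ (n - J) ∣ u t + u t' :=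
    fun t ht t' ht' => pow_sub_dvd_sub_or_add_of_pow_dvd_sq_sub_sq
      (by simpa using dvd_sub (hsq t ht) (hsq t' ht'))
      (not_pow_dvd_two_mul_of_pow_dvd_sq_sub (mul_ne_zero four_ne_zero hδ) hn (hsq t ht))
  have hM : p ^ n ≤ p ^ (n - J - V) * p ^ (J + V) := by
    rw [← pow_add]; exact Nat.pow_le_pow_right hp.out.pos (by omega)
  exact card_le_two_mul_of_forall_dvd_sub_or_add u (filter_subset _ _) hM
    (fun t _ t' _ => hclass t t') hsign

theorem card_roots_le {a b c : ℤ} (ha : a ≠ 0) (hδ : b ^ 2 - a * c ≠ 0) (n : ℕ) :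
    ((range (p ^ n)).filter fun t : ℕ => (p : ℤ) ^ n ∣ bqf a b c t 1).card ≤
      rootBound a b c := by
  set δ := b ^ 2 - a * c
  have hpw : p ^ padicValInt p (4 * δ) ≤ 4 * δ.natAbs := by
    simpa [Int.natAbs_mul] using pow_padicValInt_le_natAbs (p := p) (mul_ne_zero four_ne_zero hδ)
  have hp2 : p ^ padicValInt p 2 ≤ 2 := by
    simpa using pow_padicValInt_le_natAbs (p := p) (z := 2) two_ne_zero
  have hpV : p ^ padicValInt p (2 * a) ≤ 2 * a.natAbs := by
    simpa [Int.natAbs_mul] using pow_padicValInt_le_natAbs (p := p) (mul_ne_zero two_ne_zero ha)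
  have ha' : 0 < a.natAbs := Int.natAbs_pos.mpr ha
  rcases le_or_gt n (padicValInt p (4 * δ)) with hn | hn
  · calc _ ≤ p ^ n := (card_filter_le _ _).trans (card_range _).le
      _ ≤ p ^ padicValInt p (4 * δ) := Nat.pow_le_pow_right hp.out.pos hn
      _ ≤ 4 * δ.natAbs := hpw
      _ ≤ rootBound a b c := Nat.mul_le_mul_right δ.natAbs (by omega : 4 ≤ 32 * a.natAbs)
  calc _ ≤ 2 * p ^ (padicValInt p 2 + padicValInt p (4 * δ) + padicValInt p (2 * a)) :=
        card_roots_le_two_mul_pow ha hδ hn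
    _ ≤ 2 * (2 * (4 * δ.natAbs) * (2 * a.natAbs)) := by
        rw [pow_add, pow_add]; gcongr
    _ = rootBound a b c := by unfold rootBound; ring

lemma isCoprime_pow_of_not_dvd {y : ℕ} (hy : ¬ p ∣ y) (n : ℕ) : IsCoprime ((p : ℤ) ^ n) y := by
  exact_mod_cast Nat.isCoprime_iff_coprime.mpr
    (Nat.Coprime.pow_left n ((Nat.Prime.coprime_iff_not_dvd hp.out).mpr hy))

lemma isUnit_natCast_of_not_dvd {y : ℕ} (hy : ¬ p ∣ y) (n : ℕ) : IsUnit (y : ZMod (p ^ n)) :=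
  (ZMod.isUnit_iff_coprime _ _).mpr
    ((Nat.coprime_comm.mp ((Nat.Prime.coprime_iff_not_dvd hp.out).mpr hy)).pow_right n)

lemma natCast_val_mul_inv_mul {n x y : ℕ} (hy : ¬ p ∣ y) :
    ((((x : ZMod (p ^ n)) * (y : ZMod (p ^ n))⁻¹).val : ℕ) : ZMod (p ^ n)) * y = x := by
  have : NeZero (p ^ n) := ⟨pow_ne_zero n hp.out.ne_zero⟩
  rw [ZMod.natCast_zmod_val, mul_assoc, ZMod.inv_mul_of_unit _ (isUnit_natCast_of_not_dvd hy n),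
    mul_one]

lemma pow_dvd_bqf_val_mul_inv {a b c : ℤ} {n x y : ℕ} (hy : ¬ p ∣ y)
    (h : (p : ℤ) ^ n ∣ bqf a b c x y) :
    (p : ℤ) ^ n ∣ bqf a b c (((x : ZMod (p ^ n)) * (y : ZMod (p ^ n))⁻¹).val : ℕ) 1 := by
  have hmod : (x : ℤ) ≡ (((x : ZMod (p ^ n)) * (y : ZMod (p ^ n))⁻¹).val : ℕ) * y
      [ZMOD (p ^ n : ℕ)] := by
    rw [← ZMod.intCast_eq_intCast_iff]; push_cast; exact (natCast_val_mul_inv_mul hy).symm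
  simpa using dvd_bqf_one_of_dvd_bqf hmod (by simpa using isCoprime_pow_of_not_dvd hy n)
    (by simpa using h)

theorem card_filter_not_dvd_snd_le {a b c : ℤ} (ha : a ≠ 0) (hδ : b ^ 2 - a * c ≠ 0) {n m : ℕ}
    (hnm : n ≤ m) :
    ((grid (p ^ m)).filter fun z => (p : ℤ) ^ n ∣ bqf a b c z.1 z.2 ∧ ¬ p ∣ z.2).card ≤
      rootBound a b c * (p ^ m * p ^ (m - n)) := by
  have : NeZero (p ^ n) := ⟨pow_ne_zero n hp.out.ne_zero⟩
  set R := (range (p ^ n)).filter fun t : ℕ => (p : ℤ) ^ n ∣ bqf a b c t 1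
  -- `z ↦ (y, x / y mod p ^ n, x div p ^ n)` is injective, and `x / y` is a root of `q(·, 1)`
  let slope (z : ℕ × ℕ) : ℕ := ((z.1 : ZMod (p ^ n)) * (z.2 : ZMod (p ^ n))⁻¹).val
  calc _ ≤ (range (p ^ m) ×ˢ (R ×ˢ range (p ^ (m - n)))).card := by
        refine card_le_card_of_injOn (fun z => (z.2, slope z, z.1 / p ^ n)) (fun z hz => ?_)
          fun z hz z' hz' he => ?_
        · obtain ⟨hz, hq, hy⟩ := mem_filter.mp hz
          rw [mem_grid] at hz
          simp only [coe_product, coe_filter, coe_range, Set.mem_prod, Set.mem_Iio,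
            Set.mem_ofPred_eq, R]
          refine ⟨hz.2, ⟨mem_range.mpr (ZMod.val_lt _), pow_dvd_bqf_val_mul_inv hy hq⟩,
            Nat.div_lt_of_lt_mul ?_⟩
          rw [← pow_add, Nat.add_sub_cancel' hnm]; exact hz.1
        · simp only [Prod.mk.injEq] at he
          obtain ⟨h2, hs, h1⟩ := he
          refine Prod.ext (Nat.ext_div_mod h1 ((ZMod.natCast_eq_natCast_iff' _ _ _).mp ?_)) h2
          calc (z.1 : ZMod (p ^ n)) = slope z * z.2 :=
                (natCast_val_mul_inv_mul (mem_filter.mp hz).2.2).symm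
            _ = slope z' * z'.2 := by rw [hs, h2]
            _ = z'.1 := natCast_val_mul_inv_mul (mem_filter.mp hz').2.2
    _ ≤ rootBound a b c * (p ^ m * p ^ (m - n)) := by
        rw [card_product, card_product, card_range, card_range]
        have := card_roots_le (p := p) ha hδ n
        calc _ ≤ p ^ m * (rootBound a b c * p ^ (m - n)) := by gcongr
          _ = _ := by ring

theorem card_filter_primitive_le {a b c : ℤ} (ha : a ≠ 0) (hc : c ≠ 0) (hδ : b ^ 2 - a * c ≠ 0)
    {n m : ℕ} (hnm : n ≤ m) :
    ((grid (p ^ m)).filter fun z =>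
        (p : ℤ) ^ n ∣ bqf a b c z.1 z.2 ∧ ¬ (p ∣ z.1 ∧ p ∣ z.2)).card ≤
      (rootBound a b c + rootBound c b a) * (p ^ m * p ^ (m - n)) := by
  have hswap : ((grid (p ^ m)).filter fun z => (p : ℤ) ^ n ∣ bqf a b c z.1 z.2 ∧ ¬ p ∣ z.1).card ≤
      ((grid (p ^ m)).filter fun z => (p : ℤ) ^ n ∣ bqf c b a z.1 z.2 ∧ ¬ p ∣ z.2).card :=
    card_le_card_of_injOn Prod.swap (fun z hz => by
      simp only [coe_filter, mem_grid, Set.mem_ofPred_eq, Prod.fst_swap, Prod.snd_swap] at hz ⊢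
      exact ⟨hz.1.symm, bqf_swap (a := a) z.1 z.2 ▸ hz.2.1, hz.2.2⟩) Prod.swap_injective.injOn
  calc _ ≤ (((grid (p ^ m)).filter fun z => (p : ℤ) ^ n ∣ bqf a b c z.1 z.2 ∧ ¬ p ∣ z.2) ∪
        ((grid (p ^ m)).filter fun z => (p : ℤ) ^ n ∣ bqf a b c z.1 z.2 ∧ ¬ p ∣ z.1)).card :=
        card_le_card fun z hz => by simp only [mem_union, mem_filter] at hz ⊢; tauto
    _ ≤ rootBound a b c * (p ^ m * p ^ (m - n)) + rootBound c b a * (p ^ m * p ^ (m - n)) :=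
        (card_union_le _ _).trans (add_le_add (card_filter_not_dvd_snd_le ha hδ hnm)
          (hswap.trans (card_filter_not_dvd_snd_le hc (by rwa [mul_comm c a]) hnm)))
    _ = _ := by ring

omit hp in
lemma not_dvd_div_pow_and_dvd_div_pow {x y k : ℕ} (hx : p ^ k ∣ x) (hy : p ^ k ∣ y)
    (h : ¬ (p ^ (k + 1) ∣ x ∧ p ^ (k + 1) ∣ y)) : ¬ (p ∣ x / p ^ k ∧ p ∣ y / p ^ k) := by
  rwa [Nat.dvd_div_iff_mul_dvd hx, Nat.dvd_div_iff_mul_dvd hy, ← pow_succ]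

lemma pow_sub_dvd_bqf_div_pow {a b c : ℤ} {x y k n : ℕ} (hx : p ^ k ∣ x) (hy : p ^ k ∣ y)
    (h : (p : ℤ) ^ n ∣ bqf a b c x y) :
    (p : ℤ) ^ (n - 2 * k) ∣ bqf a b c ((x / p ^ k : ℕ) : ℤ) ((y / p ^ k : ℕ) : ℤ) := by
  refine pow_sub_dvd_of_pow_dvd_pow_mul ?_
  rw [pow_mul', ← bqf_mul_mul]
  have hcast {z : ℕ} (hz : p ^ k ∣ z) : (p : ℤ) ^ k * ((z / p ^ k : ℕ) : ℤ) = z := by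
    exact_mod_cast Nat.mul_div_cancel' hz
  rwa [hcast hx, hcast hy]

theorem card_le_of_forall_level {a b c : ℤ} (ha : a ≠ 0) (hc : c ≠ 0) (hδ : b ^ 2 - a * c ≠ 0)
    {S : Finset (ℕ × ℕ)} {n k : ℕ} (hk : 2 * k ≤ n) (hS : S ⊆ grid (p ^ n))
    (h : ∀ z ∈ S, (p : ℤ) ^ n ∣ bqf a b c z.1 z.2 ∧ p ^ k ∣ z.1 ∧ p ^ k ∣ z.2 ∧
      ¬ (p ^ (k + 1) ∣ z.1 ∧ p ^ (k + 1) ∣ z.2)) :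
    S.card ≤ (rootBound a b c + rootBound c b a) * p ^ n := by
  have hn : p ^ n = p ^ k * p ^ (n - k) := by rw [← pow_add]; congr 1; omega
  calc S.card ≤ ((grid (p ^ (n - k))).filter fun w =>
        (p : ℤ) ^ (n - 2 * k) ∣ bqf a b c w.1 w.2 ∧ ¬ (p ∣ w.1 ∧ p ∣ w.2)).card :=
      card_le_card_filter_grid_of_dvd _ (hn ▸ hS) fun z hz => by
        obtain ⟨hq, hx, hy, hprim⟩ := h z hz
        exact ⟨hx, hy, pow_sub_dvd_bqf_div_pow hx hy hq,
          not_dvd_div_pow_and_dvd_div_pow hx hy hprim⟩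
    _ ≤ _ * (p ^ (n - k) * p ^ (n - k - (n - 2 * k))) :=
      card_filter_primitive_le ha hc hδ (by omega)
    _ = _ := by rw [← pow_add]; congr 2; omega

theorem le_two_mul_add_natAbs_res₂ {a₁ b₁ c₁ a₂ b₂ c₂ : ℤ} (hres : res₂ a₁ b₁ c₁ a₂ b₂ c₂ ≠ 0)
    {x y k n : ℕ} (h₁ : (p : ℤ) ^ n ∣ bqf a₁ b₁ c₁ x y) (h₂ : (p : ℤ) ^ n ∣ bqf a₂ b₂ c₂ x y)
    (hx : p ^ k ∣ x) (hy : p ^ k ∣ y) (hprim : ¬ (p ^ (k + 1) ∣ x ∧ p ^ (k + 1) ∣ y)) :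
    n ≤ 2 * k + (res₂ a₁ b₁ c₁ a₂ b₂ c₂).natAbs := by
  have hcop : IsCoprime ((p : ℤ) ^ (n - 2 * k)) ((x / p ^ k : ℕ) : ℤ) ∨
      IsCoprime ((p : ℤ) ^ (n - 2 * k)) ((y / p ^ k : ℕ) : ℤ) :=
    (not_and_or.mp (not_dvd_div_pow_and_dvd_div_pow hx hy hprim)).imp
      (isCoprime_pow_of_not_dvd · _) (isCoprime_pow_of_not_dvd · _)
  have hdvd := dvd_res₂_of_dvd_bqf hcop (pow_sub_dvd_bqf_div_pow hx hy h₁)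
    (pow_sub_dvd_bqf_div_pow hx hy h₂)
  have := (Nat.lt_pow_self hp.out.one_lt (n := n - 2 * k)).trans_le
    (pow_le_natAbs_of_dvd hdvd hres)
  omega

lemma exists_lt_pow_dvd_not_pow_succ_dvd {x y K : ℕ} (h : ¬ (p ^ K ∣ x ∧ p ^ K ∣ y)) :
    ∃ k < K, p ^ k ∣ x ∧ p ^ k ∣ y ∧ ¬ (p ^ (k + 1) ∣ x ∧ p ^ (k + 1) ∣ y) := by
  have hgcd (j : ℕ) : p ^ j ∣ x ∧ p ^ j ∣ y ↔ p ^ j ∣ Nat.gcd x y := Nat.dvd_gcd_iff.symm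
  have hg : Nat.gcd x y ≠ 0 := fun h0 => h (by simp [Nat.gcd_eq_zero_iff.mp h0])
  set k := (Nat.gcd x y).factorization p
  have hk := (hgcd k).mpr (Nat.ordProj_dvd _ _)
  refine ⟨k, lt_of_not_ge fun hKk => h ?_, hk.1, hk.2,
    (hgcd (k + 1)).not.mpr (Nat.pow_succ_factorization_not_dvd hg hp.out)⟩
  exact ⟨(pow_dvd_pow p hKk).trans hk.1, (pow_dvd_pow p hKk).trans hk.2⟩

def pairBound (a₁ b₁ c₁ a₂ b₂ c₂ : ℤ) : ℕ :=
  (rootBound a₂ b₂ c₂ + rootBound c₂ b₂ a₂) * ((res₂ a₁ b₁ c₁ a₂ b₂ c₂).natAbs + 2) + 1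

theorem card_common_zeros_le {a₁ b₁ c₁ a₂ b₂ c₂ : ℤ} (ha₂ : a₂ ≠ 0) (hc₂ : c₂ ≠ 0)
    (hδ₂ : b₂ ^ 2 - a₂ * c₂ ≠ 0) (hres : res₂ a₁ b₁ c₁ a₂ b₂ c₂ ≠ 0) {n₁ n₂ : ℕ}
    (h12 : n₁ ≤ n₂) :
    ((grid (p ^ n₂)).filter fun z => (p : ℤ) ^ n₂ ∣ bqf a₂ b₂ c₂ z.1 z.2 ∧
        (p : ℤ) ^ n₁ ∣ bqf a₁ b₁ c₁ z.1 z.2).card ≤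
      pairBound a₁ b₁ c₁ a₂ b₂ c₂ * ((n₂ - n₁ + 1) * p ^ n₂) := by
  set S := (grid (p ^ n₂)).filter fun z => (p : ℤ) ^ n₂ ∣ bqf a₂ b₂ c₂ z.1 z.2 ∧
    (p : ℤ) ^ n₁ ∣ bqf a₁ b₁ c₁ z.1 z.2
  set r := (res₂ a₁ b₁ c₁ a₂ b₂ c₂).natAbs
  set C := rootBound a₂ b₂ c₂ + rootBound c₂ b₂ a₂
  set K := (n₂ + 1) / 2
  let level (k : ℕ) (z : ℕ × ℕ) : Prop :=
    p ^ k ∣ z.1 ∧ p ^ k ∣ z.2 ∧ ¬ (p ^ (k + 1) ∣ z.1 ∧ p ^ (k + 1) ∣ z.2)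
  have hcover : S ⊆ S.filter (fun z => p ^ K ∣ z.1 ∧ p ^ K ∣ z.2) ∪
      (Ico ((n₁ - r) / 2) K).biUnion fun k => S.filter (level k) := by
    intro z hz
    rw [mem_union, mem_filter, mem_biUnion]
    by_cases htail : p ^ K ∣ z.1 ∧ p ^ K ∣ z.2
    · exact .inl ⟨hz, htail⟩
    refine .inr ?_
    obtain ⟨k, hkK, hlevel⟩ := exists_lt_pow_dvd_not_pow_succ_dvd htail
    obtain ⟨-, hq₂, hq₁⟩ := mem_filter.mp hz
    have := le_two_mul_add_natAbs_res₂ hres hq₁ ((pow_dvd_pow _ h12).trans hq₂)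
      hlevel.1 hlevel.2.1 hlevel.2.2
    exact ⟨k, mem_Ico.mpr ⟨by omega, hkK⟩, mem_filter.mpr ⟨hz, hlevel⟩⟩
  have htail : (S.filter fun z => p ^ K ∣ z.1 ∧ p ^ K ∣ z.2).card ≤ p ^ n₂ :=
    calc _ ≤ ((grid (p ^ (n₂ - K))).filter fun _ => True).card :=
          card_le_card_filter_grid_of_dvd _
            (by rw [← pow_add, Nat.add_sub_cancel' (by omega)]
                exact (filter_subset _ _).trans (filter_subset _ _))
            fun z hz => ⟨(mem_filter.mp hz).2.1, (mem_filter.mp hz).2.2, trivial⟩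
      _ = (p ^ (n₂ - K)) ^ 2 := by rw [filter_true_of_mem fun _ _ => trivial, card_grid]
      _ ≤ p ^ n₂ := by rw [← pow_mul]; exact Nat.pow_le_pow_right hp.out.pos (by omega)
  have hlevel : ∀ k ∈ Ico ((n₁ - r) / 2) K, (S.filter (level k)).card ≤ C * p ^ n₂ :=
    fun k hk => card_le_of_forall_level ha₂ hc₂ hδ₂ (by have := (mem_Ico.mp hk).2; omega)
      ((filter_subset _ _).trans (filter_subset _ _))
      fun z hz => ⟨(mem_filter.mp (mem_filter.mp hz).1).2.1, (mem_filter.mp hz).2⟩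
  have hK : K - (n₁ - r) / 2 ≤ (r + 2) * (n₂ - n₁ + 1) := by
    have : K - (n₁ - r) / 2 ≤ (n₂ - n₁) + r + 2 := by omega
    nlinarith
  calc S.card ≤ p ^ n₂ + (K - (n₁ - r) / 2) * (C * p ^ n₂) := by
        refine (card_le_card hcover).trans ((card_union_le _ _).trans (add_le_add htail ?_))
        exact card_biUnion_le.trans ((sum_le_card_nsmul _ _ _ hlevel).trans (by simp))
    _ ≤ (n₂ - n₁ + 1) * p ^ n₂ + ((r + 2) * (n₂ - n₁ + 1)) * (C * p ^ n₂) :=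
        add_le_add (Nat.le_mul_of_pos_left _ (by omega)) (Nat.mul_le_mul_right _ hK)
    _ = pairBound a₁ b₁ c₁ a₂ b₂ c₂ * ((n₂ - n₁ + 1) * p ^ n₂) := by unfold pairBound; ring

end Counting

section Forms

variable {g : ℕ} {a b c : Fin g → ℤ}

lemma coeffs_ne_zero_of_Dconst_ne_zero (hD : Dconst g a b c ≠ 0) (i : Fin g) :
    a i ≠ 0 ∧ c i ≠ 0 ∧ b i ^ 2 - a i * c i ≠ 0 := by
  have h := prod_ne_zero_iff.mp (right_ne_zero_of_mul (left_ne_zero_of_mul hD)) i (mem_univ i)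
  exact ⟨left_ne_zero_of_mul (left_ne_zero_of_mul h), right_ne_zero_of_mul (left_ne_zero_of_mul h),
    right_ne_zero_of_mul h⟩

lemma res₂_ne_zero_of_Dconst_ne_zero (hD : Dconst g a b c ≠ 0) {i j : Fin g} (hij : i ≠ j) :
    res₂ (a i) (b i) (c i) (a j) (b j) (c j) ≠ 0 := by
  have h := right_ne_zero_of_mul hD
  rcases hij.lt_or_gt with hij | hij
  · exact prod_ne_zero_iff.mp (prod_ne_zero_iff.mp h i (mem_univ i)) j (mem_Ioi.mpr hij)
  · rw [res₂_comm]
    exact prod_ne_zero_iff.mp (prod_ne_zero_iff.mp h j (mem_univ j)) i (mem_Ioi.mpr hij)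

theorem rho_prime_pow_le {p : ℕ} [hp : Fact p.Prime] (hD : Dconst g a b c ≠ 0) {e : Fin g → ℕ}
    {j₁ j₂ : Fin g} (hj : j₁ ≠ j₂) (hmax : ∀ i, e i ≤ e j₂) :
    rho g a b c (fun i => p ^ e i) ≤ pairBound (a j₁) (b j₁) (c j₁) (a j₂) (b j₂) (c j₂) *
      (e j₂ - e j₁ + 1) * p ^ (2 * (∑ i, e i - e j₂) + e j₂) := by
  set E := e j₂
  set m := ∑ i, e i - E
  have hprod : ∏ i, p ^ e i = p ^ m * p ^ E := by
    have := single_le_sum (fun i _ => Nat.zero_le (e i)) (mem_univ j₂)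
    rw [prod_pow_eq_pow_sum, ← pow_add]; congr 1; omega
  obtain ⟨ha, hc, hδ⟩ := coeffs_ne_zero_of_Dconst_ne_zero hD j₂
  let P (z : ℕ × ℕ) : Prop := ∀ i, ((p ^ e i : ℕ) : ℤ) ∣ qf a b c i (z.1, z.2)
  calc rho g a b c (fun i => p ^ e i) = ((grid (p ^ m * p ^ E)).filter P).card := by
        rw [← hprod]; rfl
    _ ≤ (p ^ m) ^ 2 * ((grid (p ^ E)).filter P).card :=
        card_filter_grid_mul_le (pow_pos hp.out.pos E) P fun x y => forall_congr' fun i =>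
          (dvd_bqf_mod_iff (pow_dvd_pow p (hmax i)) x y).symm
    _ ≤ (p ^ m) ^ 2 * ((grid (p ^ E)).filter fun z =>
          (p : ℤ) ^ E ∣ bqf (a j₂) (b j₂) (c j₂) z.1 z.2 ∧
            (p : ℤ) ^ e j₁ ∣ bqf (a j₁) (b j₁) (c j₁) z.1 z.2).card := by
        gcongr with z
        exact fun hz => ⟨by exact_mod_cast hz j₂, by exact_mod_cast hz j₁⟩
    _ ≤ (p ^ m) ^ 2 * (pairBound (a j₁) (b j₁) (c j₁) (a j₂) (b j₂) (c j₂) *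
          ((E - e j₁ + 1) * p ^ E)) := by
        gcongr
        exact card_common_zeros_le ha hc hδ (res₂_ne_zero_of_Dconst_ne_zero hD hj) (hmax j₁)
    _ = _ := by ring

end Forms

/-- upper bound for `ρ` at prime powers, with exponents sorted by a
permutation `σ`. -/
theorem stmt6 (g : ℕ) (hg : 2 ≤ g) (a b c : Fin g → ℤ)
    (hD : Dconst g a b c ≠ 0) :
    ∃ C : ℕ, 0 < C ∧ ∀ p : ℕ, p.Prime → ∀ e : Fin g → ℕ, ∀ σ : Equiv.Perm (Fin g),
      (∀ i j : Fin g, i ≤ j → e (σ i) ≤ e (σ j)) →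
      rho g a b c (fun i => p ^ e i) ≤
        C * (e (σ ⟨g - 1, by omega⟩) - e (σ ⟨g - 2, by omega⟩) + 1) *
          p ^ (2 * ∑ i ∈ Finset.univ.erase (⟨g - 1, by omega⟩ : Fin g), e (σ i) +
            e (σ ⟨g - 1, by omega⟩)) := by
  set K : Fin g × Fin g → ℕ := fun ij =>
    pairBound (a ij.1) (b ij.1) (c ij.1) (a ij.2) (b ij.2) (c ij.2)
  refine ⟨∑ ij, K ij + 1, Nat.succ_pos _, fun p hp e σ hsorted => ?_⟩
  have : Fact p.Prime := ⟨hp⟩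
  set last : Fin g := ⟨g - 1, by omega⟩
  set prev : Fin g := ⟨g - 2, by omega⟩
  have hmax (i : Fin g) : e i ≤ e (σ last) := by
    simpa using hsorted (σ.symm i) last (Fin.le_def.mpr (by simp only [last]; omega))
  have hne : σ prev ≠ σ last :=
    σ.injective.ne (by simp only [ne_eq, Fin.ext_iff, prev, last]; omega)
  have hsum : ∑ i, e i - e (σ last) = ∑ i ∈ univ.erase last, e (σ i) := by
    rw [← Equiv.sum_comp σ, ← add_sum_erase _ _ (mem_univ last)]; omega
  have hK : K (σ prev, σ last) ≤ ∑ ij, K ij + 1 :=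
    Nat.le_succ_of_le (single_le_sum (fun _ _ => Nat.zero_le _) (mem_univ _))
  calc _ ≤ K (σ prev, σ last) * (e (σ last) - e (σ prev) + 1) *
        p ^ (2 * (∑ i, e i - e (σ last)) + e (σ last)) := rho_prime_pow_le hD hne hmax
    _ ≤ _ := by rw [hsum]; gcongr
end

section
/- For all positive integers d₁,…,d_g, the Euler totient φ(d₁·d₂⋯d_g) divides ρ*(d₁,…,d_g). -/
/-!
Let `D = d₁ ⋯ d_g`. The units of `ℤ/Dℤ` act on pairs `x ∈ (ℤ/Dℤ)²` by scaling. Since each `q_i`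
is homogeneous of degree two, `q_i(u x) ≡ u² q_i(x) (mod d_i)`, and scaling by a unit keeps `x`
primitive, so the set counted by `ρ*` is stable under this action. The action on primitive pairs
is free: if `α x₁ + β x₂ = 1` and `u x = x`, then `u = α (u x₁) + β (u x₂) = 1`. Hence that set is
a disjoint union of orbits of size `#(ℤ/Dℤ)ˣ = φ(D)`.
-/

open Finset

theorem MulAction.card_dvd_card_of_stabilizer_eq_bot {G X : Type*} [Group G] [MulAction G X]
    (h : ∀ x : X, stabilizer G x = ⊥) : Nat.card G ∣ Nat.card X := by
  rw [Nat.card_congr (selfEquivOrbitsQuotientProd h), Nat.card_prod]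
  exact dvd_mul_left _ _

section UnitsActionOnPairs

variable {R : Type*} [CommRing R]

theorem stabilizer_units_eq_bot_of_isCoprime {x : R × R} (hx : IsCoprime x.1 x.2) :
    MulAction.stabilizer Rˣ x = ⊥ := by
  obtain ⟨α, β, hαβ⟩ := hx
  refine (Subgroup.eq_bot_iff_forall _).2 fun u hu => Units.ext ?_
  have hu₁ : (u : R) * x.1 = x.1 := congrArg Prod.fst hu
  have hu₂ : (u : R) * x.2 = x.2 := congrArg Prod.snd hu
  calc (u : R) = α * ((u : R) * x.1) + β * ((u : R) * x.2) := by linear_combination -(u : R) * hαβ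
    _ = 1 := by rw [hu₁, hu₂, hαβ]

theorem card_units_dvd_card_of_isCoprime (p : R × R → Prop)
    (hsmul : ∀ (u : Rˣ) (x : R × R), p x → p (u • x)) (hcop : ∀ x, p x → IsCoprime x.1 x.2) :
    Nat.card Rˣ ∣ Nat.card {x // p x} := by
  let S : SubMulAction Rˣ (R × R) := ⟨{x | p x}, fun u _ => hsmul u _⟩
  refine MulAction.card_dvd_card_of_stabilizer_eq_bot (X := S) fun x => ?_
  rw [SubMulAction.stabilizer_of_subMul]
  exact stabilizer_units_eq_bot_of_isCoprime (hcop x x.2)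

end UnitsActionOnPairs

theorem Nat.isCoprime_cast_iff_isUnit_gcd {R : Type*} [CommRing R] (a b : ℕ) :
    IsCoprime (a : R) (b : R) ↔ IsUnit ((a.gcd b : ℕ) : R) := by
  constructor
  · exact fun h => isCoprime_self.1 <|
      (h.of_isCoprime_of_dvd_left (Nat.cast_dvd_cast (a.gcd_dvd_left b))).of_isCoprime_of_dvd_right
        (Nat.cast_dvd_cast (a.gcd_dvd_right b))
  · rintro ⟨u, hu⟩
    have hbezout := congrArg (Int.cast : ℤ → R) (Nat.gcd_eq_gcd_ab a b)
    push_cast [← hu] at hbezout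
    refine ⟨↑u⁻¹ * (a.gcdA b : R), ↑u⁻¹ * (a.gcdB b : R), ?_⟩
    linear_combination (↑u⁻¹ : R) * hbezout.symm + u.inv_mul

theorem ZMod.isCoprime_iff_gcd_gcd_val_eq_one {n : ℕ} [NeZero n] (x y : ZMod n) :
    IsCoprime x y ↔ (x.val.gcd y.val).gcd n = 1 := by
  rw [← Nat.coprime_iff_gcd_eq_one, ← ZMod.isUnit_iff_coprime,
    ← Nat.isCoprime_cast_iff_isUnit_gcd, ZMod.natCast_zmod_val, ZMod.natCast_zmod_val]

theorem ZMod.val_mul_intModEq {n : ℕ} [NeZero n] (x y : ZMod n) :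
    ((x * y).val : ℤ) ≡ x.val * y.val [ZMOD n] := by
  rw [← ZMod.intCast_eq_intCast_iff]
  push_cast
  simp

theorem Finset.card_filter_range_product_range_eq_card_zmod (n : ℕ) [NeZero n] (p : ℕ × ℕ → Prop)
    [DecidablePred p] :
    #((range n ×ˢ range n).filter p) = Nat.card {x : ZMod n × ZMod n // p (x.1.val, x.2.val)} := by
  rw [Nat.card_eq_fintype_card, Fintype.card_subtype]
  refine card_nbij' (fun m => ((m.1 : ZMod n), (m.2 : ZMod n))) (fun x => (x.1.val, x.2.val))
    ?_ ?_ ?_ ?_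
  · rintro ⟨m₁, m₂⟩ hm
    simp_all [Nat.mod_eq_of_lt]
  · rintro ⟨x₁, x₂⟩ hx
    simp_all [ZMod.val_lt]
  · rintro ⟨m₁, m₂⟩ hm
    simp_all [Nat.mod_eq_of_lt]
  · rintro ⟨x₁, x₂⟩ -
    simp

section QuadraticForms

variable {g : ℕ} (a b c : Fin g → ℤ) (i : Fin g)

theorem qf_modEq {m : ℤ} {x y : ℤ × ℤ} (h₁ : x.1 ≡ y.1 [ZMOD m]) (h₂ : x.2 ≡ y.2 [ZMOD m]) :
    qf a b c i x ≡ qf a b c i y [ZMOD m] := by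
  unfold qf
  gcongr

theorem qf_mul (u x y : ℤ) : qf a b c i (u * x, u * y) = u ^ 2 * qf a b c i (x, y) := by
  unfold qf
  ring

theorem dvd_qf_val_units_smul {n m : ℕ} [NeZero n] (hm : m ∣ n) (u : (ZMod n)ˣ)
    (x : ZMod n × ZMod n) (hx : (m : ℤ) ∣ qf a b c i (x.1.val, x.2.val)) :
    (m : ℤ) ∣ qf a b c i ((u • x).1.val, (u • x).2.val) := by
  have hval (z : ZMod n) : (((u : ZMod n) * z).val : ℤ) ≡ (u : ZMod n).val * z.val [ZMOD m] :=
    (ZMod.val_mul_intModEq _ _).of_dvd (Int.natCast_dvd_natCast.2 hm)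
  rw [← Int.modEq_zero_iff_dvd] at hx ⊢
  simp only [Prod.smul_fst, Prod.smul_snd, Units.smul_def, smul_eq_mul]
  calc qf a b c i (((u : ZMod n) * x.1).val, ((u : ZMod n) * x.2).val)
      ≡ qf a b c i ((u : ZMod n).val * x.1.val, (u : ZMod n).val * x.2.val) [ZMOD m] :=
        qf_modEq a b c i (hval x.1) (hval x.2)
    _ = ((u : ZMod n).val : ℤ) ^ 2 * qf a b c i (x.1.val, x.2.val) := qf_mul a b c i _ _ _
    _ ≡ ((u : ZMod n).val : ℤ) ^ 2 * 0 [ZMOD m] := hx.mul_left _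
    _ = 0 := mul_zero _

end QuadraticForms

theorem stmt9_general (g : ℕ) (a b c : Fin g → ℤ)
    (d : Fin g → ℕ) (hd : ∀ i, 0 < d i) :
    Nat.totient (∏ i, d i) ∣ rhostar g a b c d := by
  set n := ∏ i, d i
  have : NeZero n := ⟨(prod_pos fun i _ => hd i).ne'⟩
  rw [rhostar, card_filter_range_product_range_eq_card_zmod, ← ZMod.card_units_eq_totient,
    ← Nat.card_eq_fintype_card]
  refine card_units_dvd_card_of_isCoprime _ (fun u x ⟨hq, hcop⟩ => ⟨fun i => ?_, ?_⟩)
    fun x hx => (ZMod.isCoprime_iff_gcd_gcd_val_eq_one _ _).2 hx.2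
  · exact dvd_qf_val_units_smul a b c i (dvd_prod_of_mem d (mem_univ i)) u x (hq i)
  · rw [← ZMod.isCoprime_iff_gcd_gcd_val_eq_one] at hcop ⊢
    exact (isCoprime_mul_unit_left u.isUnit _ _).2 hcop

/-- `φ(d₁⋯d_g)` divides `ρ*(d₁,…,d_g)`. -/
theorem stmt9 (g : ℕ) (hg : 2 ≤ g) (a b c : Fin g → ℤ)
    (d : Fin g → ℕ) (hd : ∀ i, 0 < d i) :
    Nat.totient (∏ i, d i) ∣ rhostar g a b c d :=
  stmt9_general g a b c d hd
end
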